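/- arXiv:1303.0627 — 4 statements merged into one kernel-verified Lean document; each statement's English description precedes it below -/
import Mathlib

section
/- Let α be a Borel probability measure on ℝ with infinite support and finite moments up to order 2n, with orthonormal polynomials p_j(x) = Σ_{i=0}^{j} π_{j,i} x^i, evaluated at complex arguments, and P_n(z) = (p_0(z), …, p_n(z))ᵀ. Then (1/2π) ∫_0^{2π} P_n(e^{it}) P_n(e^{−it})ᵀ dt = Π_n Π_nᵀ; consequently (1/2π) Σ_{j=0}^{n} ∫_0^{2π} |p_j(e^{it})|² dt = trace(M_n(α)^{-1}) = Σ_{j=0}^{n} 1/ξ_{j,n}. -/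
/-!
On the unit circle `∫₀^{2π} e^{iat} e^{-ibt} dt = 2π δ_{ab}`, so for real polynomials `q, r` the
integral `(1/2π) ∫ q(e^{it}) r(e^{-it}) dt` is the Euclidean inner product of their coefficient
vectors; for the `p_j` this gives the entries of `Π_n Π_nᵀ`. Orthonormality of the `p_j` says
`Π_n M_n Π_nᵀ = 1`, hence `M_n⁻¹ = Π_nᵀ Π_n`, whose trace is `tr (Π_n Π_nᵀ) = Σ_j Σ_i π_{j,i}²`,
the sum of the diagonal circle integrals. Diagonalizing `M_n` by the spectral theorem gives
`tr M_n⁻¹ = Σ_j 1/ξ_{j,n}`.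
-/

open MeasureTheory Matrix

/-- The `k`-th moment of the measure `α`. -/
noncomputable def mom (α : Measure ℝ) (k : ℕ) : ℝ := ∫ x, x ^ k ∂α

/-- The `(N+1) × (N+1)` Hankel moment matrix of `α`. -/
noncomputable def momMatrix (α : Measure ℝ) (N : ℕ) :
    Matrix (Fin (N + 1)) (Fin (N + 1)) ℝ :=
  Matrix.of fun i j => mom α ((i : ℕ) + (j : ℕ))

/-- The (topological) support of a measure on `ℝ`. -/
def measSupport (α : Measure ℝ) : Set ℝ := {x | ∀ U ∈ nhds x, 0 < α U}

/-- The lower triangular matrix `Π_n` of power coefficients of the polynomials `p`. -/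
noncomputable def PiMat (p : ℕ → Polynomial ℝ) (n : ℕ) :
    Matrix (Fin (n + 1)) (Fin (n + 1)) ℝ :=
  Matrix.of fun i j => (p (i : ℕ)).coeff (j : ℕ)

section CircleIntegral

open Polynomial Complex ComplexConjugate

theorem integral_exp_pow_mul_exp_neg_pow (a b : ℕ) :
    ∫ t in (0:ℝ)..(2 * Real.pi), exp (I * t) ^ a * exp (-(I * t)) ^ b =
      if a = b then (2 * Real.pi : ℂ) else 0 := by
  have hexp : ∀ t : ℝ, exp (I * t) ^ a * exp (-(I * t)) ^ b = exp (I * ((a : ℂ) - b) * t) := by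
    intro t
    rw [← exp_nat_mul, ← exp_nat_mul, ← exp_add]
    ring_nf
  simp only [hexp]
  split_ifs with hab
  · simp [hab]
  · have hc : I * ((a : ℂ) - b) ≠ 0 :=
      mul_ne_zero I_ne_zero (sub_ne_zero.mpr (by exact_mod_cast hab))
    have hperiod : exp (I * ((a : ℂ) - b) * (2 * Real.pi)) = 1 := by
      rw [← exp_int_mul_two_pi_mul_I ((a : ℤ) - b)]
      push_cast
      ring_nf
    rw [integral_exp_mul_complex hc]
    push_cast
    rw [hperiod, mul_zero, exp_zero, sub_self, zero_div]

theorem integral_aeval_exp_mul_aeval_exp_neg {n : ℕ} {q r : ℝ[X]}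
    (hq : q.natDegree ≤ n) (hr : r.natDegree ≤ n) :
    ∫ t in (0:ℝ)..(2 * Real.pi), aeval (exp (I * t)) q * aeval (exp (-(I * t))) r =
      2 * Real.pi * ∑ i ∈ Finset.range (n + 1), (q.coeff i : ℂ) * r.coeff i := by
  have hexpand : ∀ t : ℝ, aeval (exp (I * t)) q * aeval (exp (-(I * t))) r =
      ∑ a ∈ Finset.range (n + 1), ∑ b ∈ Finset.range (n + 1),
        (q.coeff a : ℂ) * r.coeff b * (exp (I * t) ^ a * exp (-(I * t)) ^ b) := by
    intro t
    rw [aeval_eq_sum_range' (Nat.lt_succ_of_le hq), aeval_eq_sum_range' (Nat.lt_succ_of_le hr),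
      Finset.sum_mul_sum]
    simp only [Algebra.smul_def, coe_algebraMap]
    exact Finset.sum_congr rfl fun a _ => Finset.sum_congr rfl fun b _ => by ring
  have hcont : ∀ a b : ℕ, Continuous fun t : ℝ =>
      (q.coeff a : ℂ) * r.coeff b * (exp (I * t) ^ a * exp (-(I * t)) ^ b) :=
    fun a b => by fun_prop
  simp only [hexpand]
  rw [intervalIntegral.integral_finsetSum fun a _ =>
    (continuous_finsetSum _ fun b _ => hcont a b).intervalIntegrable _ _, Finset.mul_sum]
  refine Finset.sum_congr rfl fun a ha => ?_
  rw [intervalIntegral.integral_finsetSum fun b _ => (hcont a b).intervalIntegrable _ _]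
  simp only [intervalIntegral.integral_const_mul, integral_exp_pow_mul_exp_neg_pow, mul_ite,
    mul_zero, Finset.sum_ite_eq, ha, if_true]
  ring

theorem conj_aeval_exp_mul_I (q : ℝ[X]) (t : ℝ) :
    conj (aeval (exp (I * t)) q) = aeval (exp (-(I * t))) q := by
  rw [← aeval_conj, ← exp_conj, map_mul, conj_I, conj_ofReal, neg_mul]

theorem integral_norm_aeval_exp_sq {n : ℕ} {q : ℝ[X]} (hq : q.natDegree ≤ n) :
    ∫ t in (0:ℝ)..(2 * Real.pi), ‖aeval (exp (I * t)) q‖ ^ 2 =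
      2 * Real.pi * ∑ i ∈ Finset.range (n + 1), q.coeff i ^ 2 := by
  have hsq : ∀ t : ℝ, ((‖aeval (exp (I * t)) q‖ ^ 2 : ℝ) : ℂ) =
      aeval (exp (I * t)) q * aeval (exp (-(I * t))) q := by
    intro t
    rw [← conj_aeval_exp_mul_I, mul_conj, normSq_eq_norm_sq]
  apply ofReal_injective
  rw [← intervalIntegral.integral_ofReal, intervalIntegral.integral_congr fun t _ => hsq t,
    integral_aeval_exp_mul_aeval_exp_neg hq hq]
  push_cast
  simp only [sq]

end CircleIntegral

theorem PiMat_mul_transpose_apply (p : ℕ → Polynomial ℝ) (n : ℕ) (j k : Fin (n + 1)) :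
    (PiMat p n * (PiMat p n)ᵀ) j k = ∑ i ∈ Finset.range (n + 1), (p j).coeff i * (p k).coeff i :=
  Fin.sum_univ_eq_sum_range (fun i => (p j).coeff i * (p k).coeff i) _

open Polynomial in
theorem integral_eval_mul_eval_eq_sum_mom {n : ℕ} {α : Measure ℝ}
    (hint : ∀ k ≤ 2 * n, Integrable (fun x : ℝ => x ^ k) α) {q r : ℝ[X]}
    (hq : q.natDegree ≤ n) (hr : r.natDegree ≤ n) :
    ∫ x, q.eval x * r.eval x ∂α =
      ∑ a : Fin (n + 1), ∑ b : Fin (n + 1), q.coeff a * r.coeff b * mom α (a + b) := by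
  have hexpand : ∀ x : ℝ, q.eval x * r.eval x =
      ∑ a : Fin (n + 1), ∑ b : Fin (n + 1), q.coeff a * r.coeff b * x ^ ((a : ℕ) + b) := by
    intro x
    rw [eval_eq_sum_range' (Nat.lt_succ_of_le hq), eval_eq_sum_range' (Nat.lt_succ_of_le hr),
      Finset.sum_mul_sum, ← Fin.sum_univ_eq_sum_range]
    refine Finset.sum_congr rfl fun a _ => ?_
    rw [← Fin.sum_univ_eq_sum_range]
    exact Finset.sum_congr rfl fun b _ => by ring
  have hmonomial : ∀ a b : Fin (n + 1),
      Integrable (fun x : ℝ => q.coeff a * r.coeff b * x ^ ((a : ℕ) + b)) α :=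
    fun a b => (hint _ (by omega)).const_mul _
  simp only [hexpand]
  rw [integral_finsetSum _ fun a _ => integrable_finsetSum _ fun b _ => hmonomial a b]
  refine Finset.sum_congr rfl fun a _ => ?_
  rw [integral_finsetSum _ fun b _ => hmonomial a b]
  exact Finset.sum_congr rfl fun b _ => integral_const_mul _ _

theorem PiMat_mul_momMatrix_mul_transpose_apply {n : ℕ} {α : Measure ℝ}
    (hint : ∀ k ≤ 2 * n, Integrable (fun x : ℝ => x ^ k) α) {p : ℕ → Polynomial ℝ}
    (hdeg : ∀ k ≤ n, (p k).natDegree ≤ n) (j k : Fin (n + 1)) :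
    (PiMat p n * momMatrix α n * (PiMat p n)ᵀ) j k = ∫ x, (p j).eval x * (p k).eval x ∂α := by
  rw [integral_eval_mul_eval_eq_sum_mom hint (hdeg j j.is_le) (hdeg k k.is_le), Finset.sum_comm]
  simp only [mul_apply, transpose_apply, PiMat, momMatrix, of_apply, Finset.sum_mul]
  exact Finset.sum_congr rfl fun b _ => Finset.sum_congr rfl fun a _ => by ring

theorem PiMat_mul_momMatrix_mul_transpose_eq_one {n : ℕ} {α : Measure ℝ}
    (hint : ∀ k ≤ 2 * n, Integrable (fun x : ℝ => x ^ k) α) {p : ℕ → Polynomial ℝ}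
    (hdeg : ∀ k ≤ n, (p k).natDegree ≤ n)
    (horth : ∀ j k, ∫ x, (p j).eval x * (p k).eval x ∂α = if j = k then 1 else 0) :
    PiMat p n * momMatrix α n * (PiMat p n)ᵀ = 1 := by
  ext j k
  simp [PiMat_mul_momMatrix_mul_transpose_apply hint hdeg, horth, one_apply, Fin.val_inj]

theorem momMatrix_mul_transpose_mul_PiMat_eq_one {n : ℕ} {α : Measure ℝ}
    (hint : ∀ k ≤ 2 * n, Integrable (fun x : ℝ => x ^ k) α) {p : ℕ → Polynomial ℝ}
    (hdeg : ∀ k ≤ n, (p k).natDegree ≤ n)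
    (horth : ∀ j k, ∫ x, (p j).eval x * (p k).eval x ∂α = if j = k then 1 else 0) :
    momMatrix α n * ((PiMat p n)ᵀ * PiMat p n) = 1 := by
  rw [← mul_assoc, mul_eq_one_comm, ← mul_assoc]
  exact PiMat_mul_momMatrix_mul_transpose_eq_one hint hdeg horth

theorem Matrix.IsHermitian.trace_inv {𝕜 ι : Type*} [RCLike 𝕜] [Fintype ι] [DecidableEq ι]
    {A : Matrix ι ι 𝕜} (hA : A.IsHermitian) (hdet : IsUnit A.det) :
    A⁻¹.trace = ∑ i, ((hA.eigenvalues i : 𝕜))⁻¹ := by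
  set U : Matrix ι ι 𝕜 := (hA.eigenvectorUnitary : Matrix ι ι 𝕜)
  set d : ι → 𝕜 := fun i => hA.eigenvalues i
  have hU : star U * U = 1 := Unitary.coe_star_mul_self _
  have hUU : U * star U = 1 := Unitary.coe_mul_star_self _
  have hA' : A = U * diagonal d * star U := hA.spectral_theorem
  have hd : ∀ i, d i ≠ 0 := by
    intro i hi
    exact hdet.ne_zero (hA.det_eq_prod_eigenvalues ▸ Finset.prod_eq_zero (Finset.mem_univ i) hi)
  have hinv : A * (U * diagonal d⁻¹ * star U) = 1 := by
    calc A * (U * diagonal d⁻¹ * star U)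
        = U * (diagonal d * (star U * U) * diagonal d⁻¹) * star U := by rw [hA']; noncomm_ring
      _ = 1 := by
        rw [hU, mul_one, diagonal_mul_diagonal,
          show (fun i => d i * d⁻¹ i) = fun _ => 1 from funext fun i => mul_inv_cancel₀ (hd i),
          diagonal_one, mul_one, hUU]
  rw [inv_eq_right_inv hinv, trace_mul_cycle, hU, one_mul, trace_diagonal]
  rfl

theorem stmt_6_general (n : ℕ) (α : Measure ℝ)
    (hint : ∀ k ≤ 2 * n, Integrable (fun x : ℝ => x ^ k) α)
    (p : ℕ → Polynomial ℝ)
    (hdeg : ∀ k, (p k).natDegree = k)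
    (horth : ∀ j k, ∫ x, (p j).eval x * (p k).eval x ∂α = if j = k then 1 else 0)
    (hM : (momMatrix α n).IsHermitian)
    (ξ : Fin (n + 1) → ℝ)
    (hperm : ∃ σ : Equiv.Perm (Fin (n + 1)), ∀ i, ξ i = hM.eigenvalues (σ i)) :
    (∀ j k : Fin (n + 1),
      (1 / (2 * Real.pi)) •
        (∫ t in (0:ℝ)..(2 * Real.pi),
          (Polynomial.aeval (Complex.exp (Complex.I * (t : ℂ))) (p (j : ℕ))) *
            (Polynomial.aeval (Complex.exp (-(Complex.I * (t : ℂ)))) (p (k : ℕ)))) =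
        ((PiMat p n * (PiMat p n)ᵀ) j k : ℂ)) ∧
    ((1 / (2 * Real.pi)) * ∑ j ∈ Finset.range (n + 1),
        ∫ t in (0:ℝ)..(2 * Real.pi),
          ‖Polynomial.aeval (Complex.exp (Complex.I * (t : ℂ))) (p j)‖ ^ 2 =
      ((momMatrix α n)⁻¹).trace) ∧
    (((momMatrix α n)⁻¹).trace = ∑ j, 1 / ξ j) := by
  have hpi : 2 * Real.pi ≠ 0 := by positivity
  have hdeg_le : ∀ k ≤ n, (p k).natDegree ≤ n := fun k hk => (hdeg k).trans_le hk
  have hinv := momMatrix_mul_transpose_mul_PiMat_eq_one hint hdeg_le horth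
  refine ⟨fun j k => ?_, ?_, ?_⟩
  · rw [integral_aeval_exp_mul_aeval_exp_neg (hdeg_le j j.is_le) (hdeg_le k k.is_le),
      PiMat_mul_transpose_apply, Complex.real_smul]
    push_cast
    field_simp
  · rw [Finset.sum_congr rfl fun j hj =>
        integral_norm_aeval_exp_sq (hdeg_le j (Nat.le_of_lt_succ (Finset.mem_range.mp hj))),
      ← Finset.mul_sum, one_div, inv_mul_cancel_left₀ hpi, inv_eq_right_inv hinv,
      trace_mul_comm, trace,
      ← Fin.sum_univ_eq_sum_range (fun j => ∑ i ∈ Finset.range (n + 1), (p j).coeff i ^ 2)]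
    simp only [diag_apply, PiMat_mul_transpose_apply, sq]
  · obtain ⟨σ, hσ⟩ := hperm
    rw [hM.trace_inv (isUnit_det_of_right_inverse hinv), ← Equiv.sum_comp σ]
    simp [hσ]

theorem stmt_6 (n : ℕ) (α : Measure ℝ) [IsProbabilityMeasure α]
    (hsupp : (measSupport α).Infinite)
    (hint : ∀ k ≤ 2 * n, Integrable (fun x : ℝ => x ^ k) α)
    (p : ℕ → Polynomial ℝ)
    (hdeg : ∀ k, (p k).natDegree = k)
    (hlead : ∀ k, 0 < (p k).leadingCoeff)
    (horth : ∀ j k, ∫ x, (p j).eval x * (p k).eval x ∂α = if j = k then 1 else 0)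
    (hM : (momMatrix α n).IsHermitian)
    (ξ : Fin (n + 1) → ℝ) (hmono : Monotone ξ)
    (hperm : ∃ σ : Equiv.Perm (Fin (n + 1)), ∀ i, ξ i = hM.eigenvalues (σ i)) :
    (∀ j k : Fin (n + 1),
      (1 / (2 * Real.pi)) •
        (∫ t in (0:ℝ)..(2 * Real.pi),
          (Polynomial.aeval (Complex.exp (Complex.I * (t : ℂ))) (p (j : ℕ))) *
            (Polynomial.aeval (Complex.exp (-(Complex.I * (t : ℂ)))) (p (k : ℕ)))) =
        ((PiMat p n * (PiMat p n)ᵀ) j k : ℂ)) ∧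
    ((1 / (2 * Real.pi)) * ∑ j ∈ Finset.range (n + 1),
        ∫ t in (0:ℝ)..(2 * Real.pi),
          ‖Polynomial.aeval (Complex.exp (Complex.I * (t : ℂ))) (p j)‖ ^ 2 =
      ((momMatrix α n)⁻¹).trace) ∧
    (((momMatrix α n)⁻¹).trace = ∑ j, 1 / ξ j) :=
  stmt_6_general n α hint p hdeg horth hM ξ hperm
end

section
/- Let α be a Borel probability measure on ℝ with infinite support and all moments finite, with orthonormal polynomials (p_n)_{n≥0}. Then for α-almost every x: (1/(√(n+1) · (log(n+2))²)) Σ_{i=0}^{n} p_i(x) → 0 as n → ∞. -/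
/-!
By orthonormality the partial sums `S N = ∑ i < N, p i x` have `∫ S N ^ 2 = N`, and the
Rademacher–Menshov chaining argument controls them all at once: writing `[0, N)` with
`N ≤ 2 ^ K` as a union of at most one dyadic block of each size and applying Cauchy–Schwarz
gives `S N ^ 2 ≤ (K + 1) V K`, where `V K` is the sum of the squared block sums over all dyadic
subintervals of `[0, 2 ^ K)`, so that `∫ V K = (K + 1) 2 ^ K`. Hence
`∑ K, ∫ V K / (2 ^ K (K + 1) ^ 3) < ∞`, so `V K / (2 ^ K (K + 1) ^ 3)` tends to zero almost
everywhere, and choosing `2 ^ K` comparable to `N` turns this into `S N ^ 2 = o(N log ^ 4 N)`.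
-/

open MeasureTheory

open Finset Filter Topology

/-- The sum of the squared block sums `(∑ i ∈ Ico b (b + 2 ^ j), c i) ^ 2` over all dyadic
subintervals `[b, b + 2 ^ j)` of `[a, a + 2 ^ k)`. -/
noncomputable def dyadicSqSum (c : ℕ → ℝ) : ℕ → ℕ → ℝ
  | 0, a => c a ^ 2
  | k + 1, a => dyadicSqSum c k a + dyadicSqSum c k (a + 2 ^ k) +
      (∑ i ∈ Ico a (a + 2 ^ (k + 1)), c i) ^ 2

section Sequence

variable (c : ℕ → ℝ)

lemma dyadicSqSum_nonneg (k a : ℕ) : 0 ≤ dyadicSqSum c k a := by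
  induction k generalizing a with
  | zero => exact sq_nonneg _
  | succ k ih => exact add_nonneg (add_nonneg (ih a) (ih _)) (sq_nonneg _)

lemma sq_sum_Ico_le_dyadicSqSum (k a : ℕ) :
    (∑ i ∈ Ico a (a + 2 ^ k), c i) ^ 2 ≤ dyadicSqSum c k a := by
  cases k with
  | zero => simp [dyadicSqSum]
  | succ k =>
    have := add_nonneg (dyadicSqSum_nonneg c k a) (dyadicSqSum_nonneg c k (a + 2 ^ k))
    rw [dyadicSqSum]
    linarith

lemma dyadicSqSum_add_le_dyadicSqSum_succ (k a : ℕ) :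
    dyadicSqSum c k a + dyadicSqSum c k (a + 2 ^ k) ≤ dyadicSqSum c (k + 1) a :=
  le_add_of_nonneg_right (sq_nonneg _)

lemma sq_sum_Ico_le_mul_dyadicSqSum (k : ℕ) {a t : ℕ} (ht : t ≤ 2 ^ k) :
    (∑ i ∈ Ico a (a + t), c i) ^ 2 ≤ (k + 1) * dyadicSqSum c k a := by
  induction k generalizing a t with
  | zero =>
    interval_cases t
    · simpa using dyadicSqSum_nonneg c 0 a
    · simpa using sq_sum_Ico_le_dyadicSqSum c 0 a
  | succ k ih =>
    have hsucc := dyadicSqSum_add_le_dyadicSqSum_succ c k a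
    have hfirst := dyadicSqSum_nonneg c k a
    have hsecond := dyadicSqSum_nonneg c k (a + 2 ^ k)
    push_cast
    rcases le_or_gt t (2 ^ k) with hle | hgt
    · nlinarith [ih hle (a := a)]
    obtain ⟨s, rfl⟩ := Nat.exists_eq_add_of_le hgt.le
    have hs : s ≤ 2 ^ k := by rw [pow_succ] at ht; omega
    rw [← add_assoc, ← sum_Ico_consecutive _ (a.le_add_right _) (Nat.le_add_right _ _)]
    set x := ∑ i ∈ Ico a (a + 2 ^ k), c i
    set y := ∑ i ∈ Ico (a + 2 ^ k) (a + 2 ^ k + s), c i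
    have hx : x ^ 2 ≤ dyadicSqSum c k a := sq_sum_Ico_le_dyadicSqSum c k a
    have hy : y ^ 2 ≤ (k + 1) * dyadicSqSum c k (a + 2 ^ k) := ih hs
    have key :
        ((k : ℝ) + 1) * (x + y) ^ 2 ≤ ((k : ℝ) + 1) * ((k + 2) * dyadicSqSum c (k + 1) a) :=
      calc ((k : ℝ) + 1) * (x + y) ^ 2 ≤ (k + 1) * (k + 2) * x ^ 2 + (k + 2) * y ^ 2 := by
            nlinarith [sq_nonneg (((k : ℝ) + 1) * x - y)]
        _ ≤ (k + 1) * (k + 2) * dyadicSqSum c k a +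
              (k + 2) * ((k + 1) * dyadicSqSum c k (a + 2 ^ k)) := by gcongr
        _ = (k + 1) * (k + 2) * (dyadicSqSum c k a + dyadicSqSum c k (a + 2 ^ k)) := by ring
        _ ≤ ((k : ℝ) + 1) * ((k + 2) * dyadicSqSum c (k + 1) a) := by
            rw [← mul_assoc]; gcongr
    have := le_of_mul_le_mul_left key (by positivity)
    linarith

lemma sq_sum_range_div_le {n K : ℕ} (hcover : n + 1 ≤ 2 ^ K) (hK : 2 ^ K ≤ 2 * (n + 1)) :
    ((∑ i ∈ range (n + 1), c i) / (√((n : ℝ) + 1) * Real.log ((n : ℝ) + 2) ^ 2)) ^ 2 ≤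
      32 / Real.log 2 ^ 4 * (dyadicSqSum c K 0 / (2 ^ K * ((K : ℝ) + 1) ^ 3)) := by
  have hpow : (2 : ℝ) ^ K ≤ 2 * (n + 1) := by exact_mod_cast hK
  have hL : 0 < Real.log ((n : ℝ) + 2) := Real.log_pos (by linarith [n.cast_nonneg (α := ℝ)])
  have hlog : ((K : ℝ) + 1) * Real.log 2 ≤ 2 * Real.log ((n : ℝ) + 2) := by
    calc ((K : ℝ) + 1) * Real.log 2 = Real.log (2 * 2 ^ K) := by
          rw [← pow_succ', Real.log_pow]; push_cast; ring
      _ ≤ Real.log (((n : ℝ) + 2) ^ 2) := Real.log_le_log (by positivity) (by nlinarith)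
      _ = 2 * Real.log ((n : ℝ) + 2) := by rw [Real.log_pow]; norm_num
  have hsize : 2 ^ K * ((K : ℝ) + 1) ^ 4 ≤
      32 / Real.log 2 ^ 4 * (((n : ℝ) + 1) * (Real.log ((n : ℝ) + 2) ^ 2) ^ 2) := by
    rw [div_mul_eq_mul_div, le_div_iff₀ (pow_pos (Real.log_pos one_lt_two) 4)]
    calc 2 ^ K * ((K : ℝ) + 1) ^ 4 * Real.log 2 ^ 4
      _ = 2 ^ K * (((K : ℝ) + 1) * Real.log 2) ^ 4 := by ring
      _ ≤ 2 * (n + 1) * (2 * Real.log ((n : ℝ) + 2)) ^ 4 := by gcongr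
      _ = 32 * (((n : ℝ) + 1) * (Real.log ((n : ℝ) + 2) ^ 2) ^ 2) := by ring
  have hchain : (∑ i ∈ range (n + 1), c i) ^ 2 ≤ (K + 1) * dyadicSqSum c K 0 := by
    have := sq_sum_Ico_le_mul_dyadicSqSum c K (a := 0) hcover
    rwa [zero_add, ← range_eq_Ico] at this
  rw [div_pow, mul_pow, Real.sq_sqrt (by positivity), div_le_iff₀ (by positivity)]
  calc (∑ i ∈ range (n + 1), c i) ^ 2 ≤ (K + 1) * dyadicSqSum c K 0 := hchain
    _ = dyadicSqSum c K 0 / (2 ^ K * ((K : ℝ) + 1) ^ 3) * (2 ^ K * ((K : ℝ) + 1) ^ 4) := by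
      field_simp
    _ ≤ dyadicSqSum c K 0 / (2 ^ K * ((K : ℝ) + 1) ^ 3) * (32 / Real.log 2 ^ 4 *
          (((n : ℝ) + 1) * (Real.log ((n : ℝ) + 2) ^ 2) ^ 2)) := by
      gcongr
      exact div_nonneg (dyadicSqSum_nonneg c K 0) (by positivity)
    _ = _ := by ring

lemma tendsto_sum_range_div_of_tendsto_dyadicSqSum_div
    (hc : Tendsto (fun k : ℕ => dyadicSqSum c k 0 / (2 ^ k * (k + 1) ^ 3)) atTop (𝓝 0)) :
    Tendsto (fun n : ℕ => 1 / (√((n : ℝ) + 1) * Real.log ((n : ℝ) + 2) ^ 2) *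
      ∑ i ∈ range (n + 1), c i) atTop (𝓝 0) := by
  have hlog : Tendsto (fun n => Nat.log 2 (n + 1) + 1) atTop atTop :=
    tendsto_atTop_atTop.mpr fun K => ⟨2 ^ K, fun n hn =>
      (Nat.le_log_of_pow_le one_lt_two (by omega)).trans (Nat.le_succ _)⟩
  have hbound := (hc.comp hlog).const_mul (32 / Real.log 2 ^ 4)
  rw [mul_zero] at hbound
  have hsqrt := (Real.continuous_sqrt.tendsto 0).comp hbound
  rw [Real.sqrt_zero] at hsqrt
  refine squeeze_zero_norm (fun n => ?_) hsqrt
  rw [Real.norm_eq_abs, one_div_mul_eq_div]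
  refine Real.abs_le_sqrt (sq_sum_range_div_le c (Nat.lt_pow_succ_log_self one_lt_two _).le ?_)
  rw [pow_succ, mul_comm]
  exact Nat.mul_le_mul_left 2 (Nat.pow_log_le_self 2 n.succ_ne_zero)

end Sequence

lemma ae_tendsto_zero_of_summable_integral_norm {Ω : Type*} [MeasurableSpace Ω]
    {μ : Measure Ω} {g : ℕ → Ω → ℝ} (hg : ∀ n, Integrable (g n) μ)
    (hsum : Summable fun n => ∫ x, ‖g n x‖ ∂μ) :
    ∀ᵐ x ∂μ, Tendsto (fun n => g n x) atTop (𝓝 0) := by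
  have hnorm : ∑' n, eLpNorm (g n) 1 μ ≠ ⊤ := by
    simp_rw [eLpNorm_one_eq_lintegral_enorm, ← ofReal_integral_norm_eq_lintegral_enorm (hg _)]
    rw [← ENNReal.ofReal_tsum_of_nonneg (fun n => integral_nonneg fun x => norm_nonneg _) hsum]
    exact ENNReal.ofReal_ne_top
  filter_upwards [summable_norm_of_tsum_eLpNorm_ne_top le_rfl
    (fun n => (hg n).aestronglyMeasurable) hnorm] with x hx
  exact tendsto_zero_iff_norm_tendsto_zero.mpr hx.tendsto_atTop_zero

section Orthonormal

variable {Ω : Type*} [MeasurableSpace Ω] {μ : Measure Ω} {f : ℕ → Ω → ℝ}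

lemma integrable_sq_sum (hint : ∀ i j, Integrable (fun x => f i x * f j x) μ) (s : Finset ℕ) :
    Integrable (fun x => (∑ i ∈ s, f i x) ^ 2) μ := by
  simp_rw [sq, sum_mul_sum]
  exact integrable_finsetSum _ fun i _ => integrable_finsetSum _ fun j _ => hint i j

lemma integral_sq_sum (hint : ∀ i j, Integrable (fun x => f i x * f j x) μ)
    (horth : ∀ i j, ∫ x, f i x * f j x ∂μ = if i = j then 1 else 0) (s : Finset ℕ) :
    ∫ x, (∑ i ∈ s, f i x) ^ 2 ∂μ = #s := by
  simp_rw [sq, sum_mul_sum]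
  rw [integral_finsetSum _ fun i _ => integrable_finsetSum _ fun j _ => hint i j]
  simp_rw [integral_finsetSum _ fun j _ => hint _ j, horth]
  simp

lemma integrable_dyadicSqSum (hint : ∀ i j, Integrable (fun x => f i x * f j x) μ) (k a : ℕ) :
    Integrable (fun x => dyadicSqSum (f · x) k a) μ := by
  induction k generalizing a with
  | zero => simpa [dyadicSqSum, sq] using hint a a
  | succ k ih => exact ((ih a).add (ih _)).add (integrable_sq_sum hint _)

lemma integral_dyadicSqSum (hint : ∀ i j, Integrable (fun x => f i x * f j x) μ)
    (horth : ∀ i j, ∫ x, f i x * f j x ∂μ = if i = j then 1 else 0) (k a : ℕ) :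
    ∫ x, dyadicSqSum (f · x) k a ∂μ = (k + 1) * 2 ^ k := by
  induction k generalizing a with
  | zero => simpa [dyadicSqSum, sq] using horth a a
  | succ k ih =>
    simp only [dyadicSqSum]
    have hfirst := integrable_dyadicSqSum hint k a
    have hsecond := integrable_dyadicSqSum hint k (a + 2 ^ k)
    rw [integral_add (f := fun x => _ + _) (hfirst.add hsecond) (integrable_sq_sum hint _),
      integral_add hfirst hsecond, ih, ih, integral_sq_sum hint horth]
    simp only [Nat.card_Ico, add_tsub_cancel_left]
    push_cast
    ring

lemma ae_tendsto_dyadicSqSum_div (hint : ∀ i j, Integrable (fun x => f i x * f j x) μ)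
    (horth : ∀ i j, ∫ x, f i x * f j x ∂μ = if i = j then 1 else 0) :
    ∀ᵐ x ∂μ, Tendsto (fun k : ℕ => dyadicSqSum (f · x) k 0 / (2 ^ k * (k + 1) ^ 3))
      atTop (𝓝 0) := by
  refine ae_tendsto_zero_of_summable_integral_norm
    (fun k => (integrable_dyadicSqSum hint k 0).div_const _) ?_
  have hintegral (k : ℕ) : ∫ x, ‖dyadicSqSum (f · x) k 0 / (2 ^ k * (k + 1) ^ 3)‖ ∂μ
      = 1 / ((k + 1 : ℕ) : ℝ) ^ 2 := by
    have hnonneg (x : Ω) : 0 ≤ dyadicSqSum (f · x) k 0 / (2 ^ k * ((k : ℝ) + 1) ^ 3) :=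
      div_nonneg (dyadicSqSum_nonneg _ k 0) (by positivity)
    simp_rw [Real.norm_of_nonneg (hnonneg _)]
    rw [integral_div, integral_dyadicSqSum hint horth]
    field_simp
    push_cast
    ring
  simp_rw [hintegral]
  exact (summable_nat_add_iff 1).mpr (Real.summable_one_div_nat_pow.mpr one_lt_two)

end Orthonormal

lemma Polynomial.integrable_eval {μ : Measure ℝ}
    (hint : ∀ k, Integrable (fun x : ℝ => x ^ k) μ) (q : Polynomial ℝ) :
    Integrable (fun x => q.eval x) μ := by
  simp_rw [Polynomial.eval_eq_sum_range]
  exact integrable_finsetSum _ fun i _ => (hint i).const_mul _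

theorem stmt_9_general (α : Measure ℝ)
    (hint : ∀ k, Integrable (fun x : ℝ => x ^ k) α)
    (p : ℕ → Polynomial ℝ)
    (horth : ∀ j k, ∫ x, (p j).eval x * (p k).eval x ∂α = if j = k then 1 else 0) :
    ∀ᵐ x ∂α, Filter.Tendsto
      (fun n : ℕ =>
        (1 / (Real.sqrt ((n : ℝ) + 1) * Real.log ((n : ℝ) + 2) ^ 2)) *
          ∑ i ∈ Finset.range (n + 1), (p i).eval x)
      Filter.atTop (nhds 0) := by
  have hprod (i j : ℕ) : Integrable (fun x => (p i).eval x * (p j).eval x) α := by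
    simpa using Polynomial.integrable_eval hint (p i * p j)
  filter_upwards [ae_tendsto_dyadicSqSum_div hprod horth] with x hx
  exact tendsto_sum_range_div_of_tendsto_dyadicSqSum_div _ hx

theorem stmt_9 (α : Measure ℝ) [IsProbabilityMeasure α]
    (hsupp : (measSupport α).Infinite)
    (hint : ∀ k, Integrable (fun x : ℝ => x ^ k) α)
    (p : ℕ → Polynomial ℝ)
    (hdeg : ∀ k, (p k).natDegree = k)
    (hlead : ∀ k, 0 < (p k).leadingCoeff)
    (horth : ∀ j k, ∫ x, (p j).eval x * (p k).eval x ∂α = if j = k then 1 else 0) :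
    ∀ᵐ x ∂α, Filter.Tendsto
      (fun n : ℕ =>
        (1 / (Real.sqrt ((n : ℝ) + 1) * Real.log ((n : ℝ) + 2) ^ 2)) *
          ∑ i ∈ Finset.range (n + 1), (p i).eval x)
      Filter.atTop (nhds 0) :=
  stmt_9_general α hint p horth
end

section
/- Let α be a Borel probability measure on ℝ with infinite support and all moments finite, let (a_n, b_n) be the three-term recurrence coefficients of its orthonormal polynomials, Δ_n(α) = det M_n(α), and let l_{i,j} be the entries of the Cholesky factor of M_n(α). Then a_1² = m_2(α) − m_1(α)², for n ≥ 2: a_n² = Δ_n(α) Δ_{n−2}(α)/Δ_{n−1}(α)², and for n ≥ 2: b_n = (Δ_{n−1}(α)/Δ_n(α)) l_{n+1,n} l_{n,n} − (Δ_{n−2}(α)/Δ_{n−1}(α)) l_{n,n−1} l_{n−1,n−1}. -/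
open MeasureTheory Matrix

/-!
Write `l i j = ∫ x ^ i p_j dα`. Since `x ^ i` is a combination of `p_0, …, p_i`,
orthonormality gives `l i j = 0` for `i < j` and `m_{i+j} = ∑ₖ l i k * l j k`; so the lower
triangular matrix `[l i j]`, whose diagonal is `1 / lead(p_i) > 0`, is the Cholesky factor of the
Hankel matrix and `Δ_n = ∏_{k ≤ n} l k k ^ 2`. Integrating `x * p_k` against `x ^ i` turns the
three-term recurrence into `l (k+1) (k+1) = a_{k+1} l k k` and
`l (k+1) k = b_k l k k + a_k l k (k-1)`, from which both formulas follow.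
-/

namespace Matrix

variable {n : Type*} [Fintype n] [LinearOrder n]

theorem IsLowerTriangular.mul_apply_self {R : Type*} [NonUnitalNonAssocSemiring R]
    {M N : Matrix n n R} (hM : M.IsLowerTriangular) (hN : N.IsLowerTriangular) (i : n) :
    (M * N) i i = M i i * N i i := by
  rw [mul_apply, Finset.sum_eq_single i (fun k _ hki => ?_) (by simp)]
  rcases hki.lt_or_gt with h | h
  · rw [hN h, mul_zero]
  · rw [hM h, zero_mul]

variable {K : Type*} [Field K] [LinearOrder K] [IsStrictOrderedRing K]

theorem IsLowerTriangular.eq_one_of_mul_transpose_eq_one {B : Matrix n n K}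
    (hB : B.IsLowerTriangular) (hdiag : ∀ i, 0 < B i i) (h : B * Bᵀ = 1) : B = 1 := by
  have : Invertible B := invertibleOfRightInverse B Bᵀ h
  have hBt : Bᵀ.IsLowerTriangular :=
    inv_eq_right_inv h ▸ blockTriangular_inv_of_blockTriangular hB
  ext i j
  rcases lt_trichotomy i j with hij | rfl | hij
  · simpa [one_apply_ne hij.ne] using hB hij
  · have hsq : B i i * B i i = 1 := by
      simpa [hB.mul_apply_self hBt] using congr_fun₂ h i i
    rw [one_apply_eq]
    exact (mul_self_eq_one_iff.1 hsq).resolve_right (by linarith [hdiag i])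
  · simpa [one_apply_ne hij.ne'] using hBt hij

theorem IsLowerTriangular.eq_of_mul_transpose_eq {L C : Matrix n n K}
    (hL : L.IsLowerTriangular) (hC : C.IsLowerTriangular) (hLd : ∀ i, 0 < L i i)
    (hCd : ∀ i, 0 < C i i) (h : L * Lᵀ = C * Cᵀ) : L = C := by
  have : Invertible C := invertibleOfIsUnitDet C <| by
    rw [det_of_isLowerTriangular C hC]
    exact (Finset.prod_pos fun i _ => hCd i).ne'.isUnit
  have hCi : C⁻¹.IsLowerTriangular := blockTriangular_inv_of_blockTriangular hC
  have hCid : ∀ i, C⁻¹ i i * C i i = 1 := fun i => by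
    simpa [hCi.mul_apply_self hC] using congr_fun₂ (inv_mul_of_invertible C) i i
  have hB : C⁻¹ * L = 1 := by
    refine IsLowerTriangular.eq_one_of_mul_transpose_eq_one (hCi.mul hL) (fun i => ?_) ?_
    · rw [hCi.mul_apply_self hL]
      exact mul_pos ((pos_iff_pos_of_mul_pos ((hCid i).symm ▸ one_pos)).2 (hCd i)) (hLd i)
    · rw [transpose_mul, Matrix.mul_assoc, ← Matrix.mul_assoc L, h, Matrix.mul_assoc,
        ← transpose_mul, inv_mul_of_invertible, transpose_one, Matrix.mul_one,
        inv_mul_of_invertible]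
  calc L = C * (C⁻¹ * L) := by rw [← Matrix.mul_assoc, mul_inv_of_invertible, Matrix.one_mul]
    _ = C := by rw [hB, Matrix.mul_one]

end Matrix

namespace Polynomial

variable {K : Type*} [Field K] (φ : K[X] →ₗ[K] K) (S : Sequence K)

lemma Sequence.isUnit_leadingCoeff (i : ℕ) : IsUnit (S i).leadingCoeff :=
  (leadingCoeff_ne_zero.2 (S.ne_zero i)).isUnit

lemma Sequence.mem_span_of_degree_lt {q : K[X]} {m : ℕ} (hq : q.degree < m) :
    q ∈ Submodule.span K (S '' Set.Iio m) := by
  rw [S.span_degreeLT fun i _ => S.isUnit_leadingCoeff i]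
  exact mem_degreeLT.2 hq

noncomputable def hankelMatrix (N : ℕ) : Matrix (Fin (N + 1)) (Fin (N + 1)) K :=
  of fun i j => φ (X ^ ((i : ℕ) + j))

noncomputable def mixedMomentMatrix (N : ℕ) : Matrix (Fin (N + 1)) (Fin (N + 1)) K :=
  of fun i j => φ (X ^ (i : ℕ) * S j)

variable {φ S} {a b : ℕ → K} (horth : ∀ j k, φ (S j * S k) = if j = k then 1 else 0)
  (hrec : ∀ k, X * S k = C (a (k + 1)) * S (k + 1) + C (b k) * S k + C (a k) * S (k - 1))

section Orthonormal

include horth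

lemma apply_mul_eq_zero_of_degree_lt {q : K[X]} {j : ℕ} (hq : q.degree < j) :
    φ (q * S j) = 0 := by
  have hmem := S.mem_span_of_degree_lt hq
  clear hq
  induction hmem using Submodule.span_induction with
  | mem r hr =>
    obtain ⟨k, hk, rfl⟩ := hr
    rw [horth, if_neg (Set.mem_Iio.1 hk).ne]
  | zero => simp
  | add r s _ _ hr hs => rw [add_mul, map_add, hr, hs, add_zero]
  | smul c r _ hr => rw [smul_mul_assoc, map_smul, hr, smul_zero]

lemma eq_sum_apply_mul_smul {q : K[X]} {m : ℕ} (hq : q.degree < m) :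
    q = ∑ k ∈ Finset.range m, φ (q * S k) • S k := by
  have hmem := S.mem_span_of_degree_lt hq
  clear hq
  induction hmem using Submodule.span_induction with
  | mem r hr =>
    obtain ⟨k, hk, rfl⟩ := hr
    simp [horth, ite_smul, Set.mem_Iio.1 hk]
  | zero => simp
  | add r s _ _ hr hs =>
    simp only [add_mul, map_add, add_smul, Finset.sum_add_distrib]
    exact congr_arg₂ _ hr hs
  | smul c r _ hr =>
    simp only [smul_mul_assoc, map_smul, smul_eq_mul, mul_smul, ← Finset.smul_sum]
    exact congr_arg _ hr

lemma apply_X_pow_mul_eq_zero {i j : ℕ} (h : i < j) : φ (X ^ i * S j) = 0 :=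
  apply_mul_eq_zero_of_degree_lt horth (by rw [degree_X_pow]; exact_mod_cast h)

lemma apply_X_pow_mul_self_mul_leadingCoeff (i : ℕ) :
    φ (X ^ i * S i) * (S i).leadingCoeff = 1 := by
  have hlow : φ ((S i).eraseLead * S i) = 0 := apply_mul_eq_zero_of_degree_lt horth
    ((degree_eraseLead_lt (S.ne_zero i)).trans_eq (S.degree_eq i))
  calc φ (X ^ i * S i) * (S i).leadingCoeff
      = φ (((S i).eraseLead + C (S i).leadingCoeff * X ^ (S i).natDegree) * S i) := by
        rw [add_mul, map_add, hlow, zero_add, mul_assoc, ← smul_eq_C_mul, map_smul,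
          S.natDegree_eq, smul_eq_mul, mul_comm]
    _ = 1 := by rw [eraseLead_add_C_mul_X_pow, horth, if_pos rfl]

lemma apply_X_pow_mul_self_ne_zero (i : ℕ) : φ (X ^ i * S i) ≠ 0 :=
  left_ne_zero_of_mul_eq_one (apply_X_pow_mul_self_mul_leadingCoeff horth i)

lemma apply_X_pow_mul_self_pos [LinearOrder K] [IsStrictOrderedRing K] {i : ℕ}
    (hlead : 0 < (S i).leadingCoeff) : 0 < φ (X ^ i * S i) :=
  (pos_iff_pos_of_mul_pos
    ((apply_X_pow_mul_self_mul_leadingCoeff horth i).symm ▸ one_pos)).2 hlead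

lemma apply_X_pow_add (i j : ℕ) :
    φ (X ^ (i + j)) = ∑ k ∈ Finset.range (i + 1), φ (X ^ i * S k) * φ (X ^ j * S k) := by
  conv_lhs => rw [pow_add, eq_sum_apply_mul_smul horth (q := X ^ i) (m := i + 1)
    (by rw [degree_X_pow]; exact_mod_cast i.lt_succ_self)]
  simp [Finset.mul_sum, mul_comm]

lemma mixedMomentMatrix_isLowerTriangular (N : ℕ) :
    (mixedMomentMatrix φ S N).IsLowerTriangular :=
  fun _ _ hij => apply_X_pow_mul_eq_zero horth hij

lemma hankelMatrix_eq_mixedMomentMatrix_mul_transpose (N : ℕ) :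
    hankelMatrix φ N = mixedMomentMatrix φ S N * (mixedMomentMatrix φ S N)ᵀ := by
  ext i j
  rw [hankelMatrix, of_apply, apply_X_pow_add horth, mul_apply]
  simp only [mixedMomentMatrix, of_apply, transpose_apply]
  rw [Fin.sum_univ_eq_sum_range (fun k => φ (X ^ (i : ℕ) * S k) * φ (X ^ (j : ℕ) * S k))]
  refine Finset.sum_subset (Finset.range_subset_range.2 (by omega)) fun k _ hk => ?_
  rw [apply_X_pow_mul_eq_zero horth (by simpa using hk), zero_mul]

lemma det_hankelMatrix (N : ℕ) :
    (hankelMatrix φ N).det = ∏ k ∈ Finset.range (N + 1), φ (X ^ k * S k) ^ 2 := by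
  rw [hankelMatrix_eq_mixedMomentMatrix_mul_transpose horth, det_mul, det_transpose,
    det_of_isLowerTriangular _ (mixedMomentMatrix_isLowerTriangular horth N), ← sq,
    ← Finset.prod_pow]
  exact Fin.prod_univ_eq_prod_range (fun k => φ (X ^ k * S k) ^ 2) (N + 1)

lemma det_hankelMatrix_succ (N : ℕ) : (hankelMatrix φ (N + 1)).det =
    (hankelMatrix φ N).det * φ (X ^ (N + 1) * S (N + 1)) ^ 2 := by
  rw [det_hankelMatrix horth, det_hankelMatrix horth, Finset.prod_range_succ]

lemma det_hankelMatrix_ne_zero (N : ℕ) : (hankelMatrix φ N).det ≠ 0 := by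
  rw [det_hankelMatrix horth]
  exact Finset.prod_ne_zero_iff.2 fun k _ =>
    pow_ne_zero 2 (apply_X_pow_mul_self_ne_zero horth k)

end Orthonormal

include hrec in
lemma apply_X_pow_succ_mul (i k : ℕ) : φ (X ^ (i + 1) * S k) =
    a (k + 1) * φ (X ^ i * S (k + 1)) + b k * φ (X ^ i * S k) + a k * φ (X ^ i * S (k - 1)) := by
  rw [pow_succ, mul_assoc, hrec]
  simp only [mul_add, ← smul_eq_C_mul, mul_smul_comm, map_add, map_smul, smul_eq_mul]

section Recurrence

include horth hrec

lemma apply_X_pow_succ_mul_succ (k : ℕ) :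
    φ (X ^ (k + 1) * S (k + 1)) = a (k + 1) * φ (X ^ k * S k) := by
  rw [apply_X_pow_succ_mul hrec, apply_X_pow_mul_eq_zero horth (by omega : k < k + 2),
    apply_X_pow_mul_eq_zero horth (by omega : k < k + 1), Nat.add_sub_cancel]
  ring

lemma apply_X_pow_succ_mul_self (k : ℕ) :
    φ (X ^ (k + 1) * S k) = b k * φ (X ^ k * S k) + a k * φ (X ^ k * S (k - 1)) := by
  rw [apply_X_pow_succ_mul hrec, apply_X_pow_mul_eq_zero horth k.lt_succ_self, mul_zero,
    zero_add]

lemma a_one_sq_eq (hone : φ 1 = 1) : a 1 ^ 2 = φ (X ^ 2) - φ X ^ 2 := by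
  have h00 : φ 1 = φ (S 0) * φ (S 0) := by simpa using apply_X_pow_add horth 0 0
  have h10 : φ X = φ (X * S 0) * φ (S 0) + φ (X * S 1) * φ (S 1) := by
    simpa [Finset.sum_range_succ] using apply_X_pow_add horth 1 0
  have h11 : φ (X ^ 2) = φ (X * S 0) ^ 2 + φ (X * S 1) ^ 2 := by
    simpa [Finset.sum_range_succ, sq] using apply_X_pow_add horth 1 1
  have h01 : φ (S 1) = 0 := by simpa using apply_X_pow_mul_eq_zero horth zero_lt_one
  have ha : φ (X * S 1) = a 1 * φ (S 0) := by
    simpa using apply_X_pow_succ_mul_succ horth hrec 0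
  rw [hone] at h00
  rw [h01, mul_zero, add_zero] at h10
  linear_combination (-1) * h11 + (φ X + φ (X * S 0) * φ (S 0)) * h10
    + (a 1 ^ 2 - φ (X * S 0) ^ 2) * h00 - (a 1 * φ (S 0) + φ (X * S 1)) * ha

lemma a_sq_eq_det_mul_det_div (k : ℕ) :
    a (k + 2) ^ 2 = (hankelMatrix φ (k + 2)).det * (hankelMatrix φ k).det /
      (hankelMatrix φ (k + 1)).det ^ 2 := by
  rw [det_hankelMatrix_succ horth (k + 1), det_hankelMatrix_succ horth k,
    apply_X_pow_succ_mul_succ horth hrec (k + 1)]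
  have := det_hankelMatrix_ne_zero horth k
  have := apply_X_pow_mul_self_ne_zero horth (k + 1)
  field_simp

lemma b_eq_det_div_det (k : ℕ) : b (k + 2) =
    (hankelMatrix φ (k + 1)).det / (hankelMatrix φ (k + 2)).det *
        φ (X ^ (k + 3) * S (k + 2)) * φ (X ^ (k + 2) * S (k + 2)) -
      (hankelMatrix φ k).det / (hankelMatrix φ (k + 1)).det *
        φ (X ^ (k + 2) * S (k + 1)) * φ (X ^ (k + 1) * S (k + 1)) := by
  have hb : φ (X ^ (k + 3) * S (k + 2)) =
      b (k + 2) * φ (X ^ (k + 2) * S (k + 2)) + a (k + 2) * φ (X ^ (k + 2) * S (k + 1)) :=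
    apply_X_pow_succ_mul_self horth hrec (k + 2)
  have ha : φ (X ^ (k + 2) * S (k + 2)) = a (k + 2) * φ (X ^ (k + 1) * S (k + 1)) :=
    apply_X_pow_succ_mul_succ horth hrec (k + 1)
  have := det_hankelMatrix_ne_zero horth k
  have := apply_X_pow_mul_self_ne_zero horth (k + 1)
  have := apply_X_pow_mul_self_ne_zero horth (k + 2)
  rw [det_hankelMatrix_succ horth (k + 1), det_hankelMatrix_succ horth k, hb]
  field_simp
  linear_combination φ (X ^ (k + 2) * S (k + 1)) * ha

end Recurrence

end Polynomial

open Polynomial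

/-- `q ↦ ∫ q dα`, defined through the moments so that it is linear without any integrability
assumption. -/
noncomputable def momentFunctional (α : Measure ℝ) : ℝ[X] →ₗ[ℝ] ℝ :=
  lsum fun k => LinearMap.mulRight ℝ (mom α k)

lemma momentFunctional_X_pow (α : Measure ℝ) (k : ℕ) :
    momentFunctional α (X ^ k) = mom α k := by
  simp [momentFunctional, ← monomial_one_right_eq_X_pow, sum_monomial_index]

lemma momMatrix_eq_hankelMatrix (α : Measure ℝ) (N : ℕ) :
    momMatrix α N = hankelMatrix (momentFunctional α) N := by
  ext i j
  simp [momMatrix, hankelMatrix, momentFunctional_X_pow]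

lemma integral_eval_eq_momentFunctional {α : Measure ℝ}
    (hint : ∀ k, Integrable (fun x : ℝ => x ^ k) α) (q : ℝ[X]) :
    ∫ x, q.eval x ∂α = momentFunctional α q := by
  simp only [eval_eq_sum, Polynomial.sum_def]
  rw [integral_finsetSum _ fun n _ => (hint n).const_mul _]
  simp [momentFunctional, mom, integral_const_mul, Polynomial.sum_def]

theorem stmt_10 (α : Measure ℝ) [IsProbabilityMeasure α]
    (hint : ∀ k, Integrable (fun x : ℝ => x ^ k) α)
    (p : ℕ → Polynomial ℝ)
    (hdeg : ∀ k, (p k).natDegree = k)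
    (hlead : ∀ k, 0 < (p k).leadingCoeff)
    (horth : ∀ j k, ∫ x, (p j).eval x * (p k).eval x ∂α = if j = k then 1 else 0)
    (a b : ℕ → ℝ)
    (hrec : ∀ k : ℕ, ∀ x : ℝ, x * (p k).eval x =
      a (k + 1) * (p (k + 1)).eval x + b k * (p k).eval x + a k * (p (k - 1)).eval x) :
    a 1 ^ 2 = mom α 2 - mom α 1 ^ 2 ∧
    ∀ n : ℕ, ∀ hn : 2 ≤ n,
      ∀ L : Matrix (Fin (n + 2)) (Fin (n + 2)) ℝ,
        (∀ i j : Fin (n + 2), i < j → L i j = 0) →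
        (∀ i, 0 < L i i) →
        momMatrix α (n + 1) = L * Lᵀ →
        (a n ^ 2 = (momMatrix α n).det * (momMatrix α (n - 2)).det /
            (momMatrix α (n - 1)).det ^ 2 ∧
         b n = ((momMatrix α (n - 1)).det / (momMatrix α n).det) *
                 L ⟨n + 1, by omega⟩ ⟨n, by omega⟩ * L ⟨n, by omega⟩ ⟨n, by omega⟩ -
               ((momMatrix α (n - 2)).det / (momMatrix α (n - 1)).det) *
                 L ⟨n, by omega⟩ ⟨n - 1, by omega⟩ * L ⟨n - 1, by omega⟩ ⟨n - 1, by omega⟩) := by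
  let S : Sequence ℝ := ⟨p, fun k => by
    rw [degree_eq_natDegree (leadingCoeff_ne_zero.1 (hlead k).ne'), hdeg]⟩
  have hSorth : ∀ j k, momentFunctional α (S j * S k) = if j = k then 1 else 0 := fun j k => by
    rw [← integral_eval_eq_momentFunctional hint, ← horth j k]
    simp [S]
  have hSrec : ∀ k, X * S k = C (a (k + 1)) * S (k + 1) + C (b k) * S k + C (a k) * S (k - 1) :=
    fun k => Polynomial.funext fun x => by simpa [S] using hrec k x
  refine ⟨?_, fun n hn L hLtri hLdiag hfact => ?_⟩
  · rw [← momentFunctional_X_pow α 2, ← momentFunctional_X_pow α 1, pow_one]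
    exact a_one_sq_eq hSorth hSrec (by simpa [mom] using momentFunctional_X_pow α 0)
  · obtain ⟨k, rfl⟩ : ∃ k, n = k + 2 := ⟨n - 2, by omega⟩
    simp only [momMatrix_eq_hankelMatrix] at hfact ⊢
    obtain rfl : L = mixedMomentMatrix (momentFunctional α) S (k + 3) :=
      IsLowerTriangular.eq_of_mul_transpose_eq (fun i j h => hLtri i j h)
        (mixedMomentMatrix_isLowerTriangular hSorth _) hLdiag
        (fun i => apply_X_pow_mul_self_pos hSorth (hlead i))
        (hfact.symm.trans (hankelMatrix_eq_mixedMomentMatrix_mul_transpose hSorth _))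
    exact ⟨a_sq_eq_det_mul_det_div hSorth hSrec k, b_eq_det_div_det hSorth hSrec k⟩
end

section
/- Let α be a symmetric Borel probability measure on ℝ (invariant under x ↦ −x) with infinite support and all moments finite, so that its monic orthogonal polynomials satisfy x p̃_n = p̃_{n+1} + a_n² p̃_{n−1} with all b_n = 0. Then all odd moments of α vanish, m_2(α) = a_1², m_4(α) = a_1²(a_1² + a_2²), and for k ≥ 3: m_{2k}(α) = (Σ_{j=1}^{2k−2} a_j²) m_{2k−2}(α) − Σ_{j=2}^{k−1} η_{2k−1,2k−1−2j} m_{2k−2j}(α), where η_{n,k} is the coefficient of x^k in p̃_n. -/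
/-!
By symmetry all odd moments vanish. Expanding `∫ p₁ p_{2k-1} dα = 0` in moments, every
even-index coefficient of `p_{2k-1}` meets an odd moment and drops out. What remains is
governed by the leading coefficient `1` of `p_{2k-1}` and its subleading coefficient
`-(a₁² + ⋯ + a_{2k-2}²)`, which the three-term recurrence produces one summand at a time.
This is the recursion; `m₂` comes from `∫ p₀ p₂ dα = 0` and `m₄` is the case `k = 2`.
-/

open MeasureTheory

open Polynomial Finset

theorem integral_eq_zero_of_odd_of_map_neg_eq {α : Measure ℝ} (hsym : α.map (fun x => -x) = α)
    {f : ℝ → ℝ} (hf : AEStronglyMeasurable f α) (hodd : ∀ x, f (-x) = -f x) :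
    ∫ x, f x ∂α = 0 := by
  have hflip : ∫ x, f x ∂α = ∫ x, f (-x) ∂α := by
    conv_lhs => rw [← hsym]
    exact integral_map measurable_neg.aemeasurable (hsym.symm ▸ hf)
  simp only [hodd, integral_neg] at hflip
  linarith

theorem mom_odd_eq_zero {α : Measure ℝ} (hsym : α.map (fun x => -x) = α) (k : ℕ) :
    mom α (2 * k + 1) = 0 :=
  integral_eq_zero_of_odd_of_map_neg_eq (f := fun x => x ^ (2 * k + 1)) hsym (by fun_prop)
    (Odd.neg_pow ⟨k, rfl⟩)

theorem integral_pow_mul_eval {α : Measure ℝ} (hint : ∀ k, Integrable (fun x : ℝ => x ^ k) α)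
    (r : ℕ) {q : ℝ[X]} {n : ℕ} (hn : q.natDegree < n) :
    ∫ x, x ^ r * q.eval x ∂α = ∑ i ∈ range n, q.coeff i * mom α (i + r) := by
  have hexpand : ∀ x : ℝ, x ^ r * q.eval x = ∑ i ∈ range n, q.coeff i * x ^ (i + r) := by
    intro x
    rw [eval_eq_sum_range' hn, mul_sum]
    exact sum_congr rfl fun i _ => by ring
  simp_rw [hexpand]
  rw [integral_finsetSum _ fun i _ => (hint _).const_mul _]
  simp only [integral_const_mul, mom]

theorem sum_range_two_mul_eq_sum_odd {M : Type*} [AddCommMonoid M] {f : ℕ → M}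
    (hf : ∀ j, f (2 * j) = 0) (k : ℕ) :
    ∑ i ∈ range (2 * k), f i = ∑ j ∈ range k, f (2 * k - 1 - 2 * j) := by
  induction k with
  | zero => simp
  | succ k ih =>
    rw [show 2 * (k + 1) = 2 * k + 1 + 1 by ring, sum_range_succ, sum_range_succ, ih, hf,
      add_zero, sum_range_succ']
    simp only [show ∀ j, 2 * k + 1 + 1 - 1 - 2 * (j + 1) = 2 * k - 1 - 2 * j by omega,
      show 2 * k + 1 + 1 - 1 - 2 * 0 = 2 * k + 1 by omega]

theorem coeff_sub_two_eq_neg_sum {p : ℕ → ℝ[X]} {b : ℕ → ℝ} (hlead : ∀ n, (p n).coeff n = 1)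
    (hrec : ∀ k, 1 ≤ k → X * p k = p (k + 1) + C (b k) * p (k - 1)) (n : ℕ) :
    (p (n + 2)).coeff n = -∑ j ∈ Icc 1 (n + 1), b j := by
  have hcoeff := congrArg (coeff · n) (hrec (n + 1) (by omega))
  simp only [coeff_add, coeff_C_mul, Nat.add_sub_cancel, hlead, mul_one] at hcoeff
  cases n with
  | zero =>
    rw [mul_coeff_zero, coeff_X_zero, zero_mul] at hcoeff
    simp only [zero_add, Icc_self, sum_singleton]
    linarith
  | succ m =>
    rw [coeff_X_mul, coeff_sub_two_eq_neg_sum hlead hrec m] at hcoeff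
    rw [sum_Icc_succ_top (by omega)]
    linarith

theorem mom_two_mul_eq_of_integral_mul_eval_eq_zero {α : Measure ℝ}
    (hint : ∀ k, Integrable (fun x : ℝ => x ^ k) α) (hodd : ∀ k, mom α (2 * k + 1) = 0)
    {P : ℝ[X]} {k : ℕ} (hk : 2 ≤ k) (hdeg : P.natDegree < 2 * k) (hlead : P.coeff (2 * k - 1) = 1)
    {s : ℝ} (hsub : P.coeff (2 * k - 3) = -s) (horth : ∫ x, x * P.eval x ∂α = 0) :
    mom α (2 * k) = s * mom α (2 * k - 2) -
      ∑ j ∈ Icc 2 (k - 1), P.coeff (2 * k - 1 - 2 * j) * mom α (2 * k - 2 * j) := by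
  have hsplit : range k = insert 0 (insert 1 (Icc 2 (k - 1))) := by
    ext j
    simp only [mem_range, mem_insert, mem_Icc]
    omega
  have hsum := integral_pow_mul_eval hint 1 hdeg
  simp only [pow_one, horth] at hsum
  have hshift : ∀ j ∈ range k,
      P.coeff (2 * k - 1 - 2 * j) * mom α (2 * k - 1 - 2 * j + 1) =
        P.coeff (2 * k - 1 - 2 * j) * mom α (2 * k - 2 * j) := fun j hj => by
    rw [show 2 * k - 1 - 2 * j + 1 = 2 * k - 2 * j by have := mem_range.mp hj; omega]
  rw [sum_range_two_mul_eq_sum_odd (fun j => by rw [hodd, mul_zero]) k,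
    sum_congr rfl hshift, hsplit, sum_insert (by simp), sum_insert (by simp)] at hsum
  simp only [mul_zero, Nat.sub_zero, mul_one, show 2 * k - 1 - 2 = 2 * k - 3 by omega, hlead,
    hsub] at hsum
  linarith

theorem stmt_15_general (α : Measure ℝ) [IsProbabilityMeasure α]
    (hint : ∀ k, Integrable (fun x : ℝ => x ^ k) α)
    (hsym : Measure.map (fun x : ℝ => -x) α = α)
    (p : ℕ → Polynomial ℝ)
    (hmonic : ∀ k, (p k).Monic)
    (hdeg : ∀ k, (p k).natDegree = k)
    (horth : ∀ j k, j ≠ k → ∫ x, (p j).eval x * (p k).eval x ∂α = 0)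
    (a : ℕ → ℝ)
    (h0 : p 0 = 1)
    (hrec0 : Polynomial.X * p 0 = p 1)
    (hrec : ∀ k, 1 ≤ k → Polynomial.X * p k =
      p (k + 1) + Polynomial.C (a k ^ 2) * p (k - 1)) :
    (∀ k : ℕ, mom α (2 * k + 1) = 0) ∧
    mom α 2 = a 1 ^ 2 ∧
    mom α 4 = a 1 ^ 2 * (a 1 ^ 2 + a 2 ^ 2) ∧
    (∀ k : ℕ, 3 ≤ k →
      mom α (2 * k) =
        (∑ j ∈ Finset.Icc 1 (2 * k - 2), a j ^ 2) * mom α (2 * k - 2) -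
          ∑ j ∈ Finset.Icc 2 (k - 1),
            (p (2 * k - 1)).coeff (2 * k - 1 - 2 * j) * mom α (2 * k - 2 * j)) := by
  have hp1 : p 1 = X := by rw [← hrec0, h0, mul_one]
  have hodd := mom_odd_eq_zero hsym
  have hlead (n : ℕ) : (p n).coeff n = 1 := by simpa [hdeg n] using (hmonic n).coeff_natDegree
  have hsub := coeff_sub_two_eq_neg_sum hlead hrec
  have hrec_mom (k : ℕ) (hk : 2 ≤ k) : mom α (2 * k) =
      (∑ j ∈ Icc 1 (2 * k - 2), a j ^ 2) * mom α (2 * k - 2) -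
        ∑ j ∈ Icc 2 (k - 1), (p (2 * k - 1)).coeff (2 * k - 1 - 2 * j) * mom α (2 * k - 2 * j) := by
    refine mom_two_mul_eq_of_integral_mul_eval_eq_zero hint hodd hk (by rw [hdeg]; omega)
      (hlead _) ?_ (by simpa [hp1] using horth 1 (2 * k - 1) (by omega))
    simpa [show 2 * k - 3 + 2 = 2 * k - 1 by omega, show 2 * k - 3 + 1 = 2 * k - 2 by omega]
      using hsub (2 * k - 3)
  have hm2 : mom α 2 = a 1 ^ 2 := by
    have h := integral_pow_mul_eval hint 0 (q := p 2) (n := 3) (by rw [hdeg]; omega)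
    rw [show ∫ x, x ^ 0 * (p 2).eval x ∂α = 0 by simpa [h0] using horth 0 2 (by norm_num)] at h
    have hmom0 : mom α 0 = 1 := by simp [mom]
    simp only [sum_range_succ, sum_range_zero, zero_add, add_zero, hsub 0, hlead, Icc_self,
      sum_singleton, hmom0, show mom α 1 = 0 from hodd 0, mul_zero, mul_one, one_mul] at h
    linarith
  refine ⟨hodd, hm2, ?_, fun k hk => hrec_mom k (by omega)⟩
  rw [hrec_mom 2 le_rfl, hm2]
  norm_num [sum_Icc_succ_top, mul_comm]

theorem stmt_15 (α : Measure ℝ) [IsProbabilityMeasure α]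
    (hsupp : (measSupport α).Infinite)
    (hint : ∀ k, Integrable (fun x : ℝ => x ^ k) α)
    (hsym : Measure.map (fun x : ℝ => -x) α = α)
    (p : ℕ → Polynomial ℝ)
    (hmonic : ∀ k, (p k).Monic)
    (hdeg : ∀ k, (p k).natDegree = k)
    (horth : ∀ j k, j ≠ k → ∫ x, (p j).eval x * (p k).eval x ∂α = 0)
    (a : ℕ → ℝ) (ha : ∀ k, 1 ≤ k → 0 < a k)
    (h0 : p 0 = 1)
    (hrec0 : Polynomial.X * p 0 = p 1)
    (hrec : ∀ k, 1 ≤ k → Polynomial.X * p k =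
      p (k + 1) + Polynomial.C (a k ^ 2) * p (k - 1)) :
    (∀ k : ℕ, mom α (2 * k + 1) = 0) ∧
    mom α 2 = a 1 ^ 2 ∧
    mom α 4 = a 1 ^ 2 * (a 1 ^ 2 + a 2 ^ 2) ∧
    (∀ k : ℕ, 3 ≤ k →
      mom α (2 * k) =
        (∑ j ∈ Finset.Icc 1 (2 * k - 2), a j ^ 2) * mom α (2 * k - 2) -
          ∑ j ∈ Finset.Icc 2 (k - 1),
            (p (2 * k - 1)).coeff (2 * k - 1 - 2 * j) * mom α (2 * k - 2 * j)) :=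
  stmt_15_general α hint hsym p hmonic hdeg horth a h0 hrec0 hrec
end
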